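/- arXiv:1511.00612 — 7 statements merged into one kernel-verified Lean document; each statement's English description precedes it below -/
import Mathlib

section
/- For any smooth vector-valued function z : ℝ² → ℝⁿ, any skew-symmetric constant matrices M, K ∈ ℝ^{n×n}, and any smooth S : ℝⁿ → ℝ such that M·z_t + K·z_x = ∇S(z), the local energy conservation law ∂_t E + ∂_x F = 0 holds, where E(z) = S(z) + (1/2) z_x · (K z) and F(z) = −(1/2) z_t · (K z). -/
open Matrix

/-- Partial derivative in x of a vector-valued function of (x,t). -/
noncomputable def pxv {n : ℕ} (z : ℝ → ℝ → (Fin n → ℝ)) : ℝ → ℝ → (Fin n → ℝ) :=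
  fun x t => deriv (fun x' => z x' t) x

/-- Partial derivative in t of a vector-valued function of (x,t). -/
noncomputable def ptv {n : ℕ} (z : ℝ → ℝ → (Fin n → ℝ)) : ℝ → ℝ → (Fin n → ℝ) :=
  fun x t => deriv (fun t' => z x t') t

/-- Partial derivatives of scalar functions of (x,t). -/
noncomputable def px (f : ℝ → ℝ → ℝ) : ℝ → ℝ → ℝ := fun x t => deriv (fun x' => f x' t) x
noncomputable def pt (f : ℝ → ℝ → ℝ) : ℝ → ℝ → ℝ := fun x t => deriv (fun t' => f x t') t

lemma hasDerivAt_comp_proj {n : ℕ} {u : ℝ → Fin n → ℝ} {u' : Fin n → ℝ} {t : ℝ}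
    (h : HasDerivAt u u' t) (i : Fin n) : HasDerivAt (fun s => u s i) (u' i) t := by
  have := (ContinuousLinearMap.proj (R := ℝ) (φ := fun _ : Fin n => ℝ) i).hasFDerivAt.comp_hasDerivAt t h
  exact this

lemma hasDerivAt_dotmul {n : ℕ} (K : Matrix (Fin n) (Fin n) ℝ)
    {u v : ℝ → Fin n → ℝ} {u' v' : Fin n → ℝ} {t : ℝ}
    (hu : HasDerivAt u u' t) (hv : HasDerivAt v v' t) :
    HasDerivAt (fun s => u s ⬝ᵥ K.mulVec (v s))
      (u' ⬝ᵥ K.mulVec (v t) + u t ⬝ᵥ K.mulVec v') t := by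
  have h : ∀ i : Fin n, HasDerivAt (fun s => u s i * ∑ j, K i j * v s j)
      (u' i * (∑ j, K i j * v t j) + u t i * ∑ j, K i j * v' j) t := by
    intro i
    exact (hasDerivAt_comp_proj hu i).mul
      (HasDerivAt.fun_sum (fun j _ => (hasDerivAt_comp_proj hv j).const_mul (K i j)))
  have := HasDerivAt.fun_sum (fun i (_ : i ∈ Finset.univ) => h i)
  simpa [dotProduct, Matrix.mulVec, Finset.sum_add_distrib] using this

/-- Local energy conservation law for a multi-symplectic PDE system
    M z_t + K z_x = ∇S(z): with E = S(z) + (1/2)⟨z_x, K z⟩ and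
    F = −(1/2)⟨z_t, K z⟩ one has ∂_t E + ∂_x F = 0. -/
theorem multisymplectic_energy_conservation
    (n : ℕ) (M K : Matrix (Fin n) (Fin n) ℝ)
    (hM : Mᵀ = -M) (hK : Kᵀ = -K)
    (S : (Fin n → ℝ) → ℝ) (hS : ContDiff ℝ (⊤ : ℕ∞) S)
    (z : ℝ → ℝ → (Fin n → ℝ))
    (hz : ContDiff ℝ (⊤ : ℕ∞) (fun p : ℝ × ℝ => z p.1 p.2))
    (hms : ∀ x t i,
      (M.mulVec (ptv z x t) + K.mulVec (pxv z x t)) i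
        = fderiv ℝ S (z x t) (Pi.single i 1)) :
    ∀ x t,
      pt (fun x t => S (z x t) + (1/2 : ℝ) * (pxv z x t ⬝ᵥ K.mulVec (z x t))) x t
        + px (fun x t => -(1/2 : ℝ) * (ptv z x t ⬝ᵥ K.mulVec (z x t))) x t = 0 := by
  intro x t
  set F : ℝ × ℝ → (Fin n → ℝ) := fun p => z p.1 p.2 with hFdef
  have hFd : Differentiable ℝ F := hz.differentiable (by simp)
  have hF' : ContDiff ℝ (⊤ : ℕ∞) (fderiv ℝ F) := hz.fderiv_right (by simp)
  have hF'd : Differentiable ℝ (fderiv ℝ F) := hF'.differentiable (by simp)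
  -- first partials
  have hx : ∀ a b : ℝ, HasDerivAt (fun x' => z x' b) (fderiv ℝ F (a, b) (1, 0)) a := by
    intro a b
    have hg : HasDerivAt (fun x' : ℝ => (x', b)) ((1 : ℝ), (0 : ℝ)) a :=
      (hasDerivAt_id a).prodMk (hasDerivAt_const a b)
    have := (hFd (a, b)).hasFDerivAt.comp_hasDerivAt a hg
    exact this
  have ht : ∀ a b : ℝ, HasDerivAt (fun t' => z a t') (fderiv ℝ F (a, b) (0, 1)) b := by
    intro a b
    have hg : HasDerivAt (fun t' : ℝ => ((a : ℝ), t')) ((0 : ℝ), (1 : ℝ)) b :=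
      (hasDerivAt_const b a).prodMk (hasDerivAt_id b)
    have := (hFd (a, b)).hasFDerivAt.comp_hasDerivAt b hg
    exact this
  have hpxv : ∀ a b : ℝ, pxv z a b = fderiv ℝ F (a, b) (1, 0) := fun a b => (hx a b).deriv
  have hptv : ∀ a b : ℝ, ptv z a b = fderiv ℝ F (a, b) (0, 1) := fun a b => (ht a b).deriv
  -- second partials
  have hxt : HasDerivAt (fun t' => fderiv ℝ F (x, t') ((1 : ℝ), (0 : ℝ)))
      (fderiv ℝ (fderiv ℝ F) (x, t) (0, 1) (1, 0)) t := by
    have hg : HasDerivAt (fun t' : ℝ => ((x : ℝ), t')) ((0 : ℝ), (1 : ℝ)) t :=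
      (hasDerivAt_const t x).prodMk (hasDerivAt_id t)
    have h1 : HasDerivAt (fun t' => fderiv ℝ F (x, t'))
        (fderiv ℝ (fderiv ℝ F) (x, t) (0, 1)) t := by
      have := (hF'd (x, t)).hasFDerivAt.comp_hasDerivAt t hg
      exact this
    have := h1.clm_apply (hasDerivAt_const t ((1 : ℝ), (0 : ℝ)))
    simpa using this
  have htx : HasDerivAt (fun x' => fderiv ℝ F (x', t) ((0 : ℝ), (1 : ℝ)))
      (fderiv ℝ (fderiv ℝ F) (x, t) (1, 0) (0, 1)) x := by
    have hg : HasDerivAt (fun x' : ℝ => (x', t)) ((1 : ℝ), (0 : ℝ)) x :=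
      (hasDerivAt_id x).prodMk (hasDerivAt_const x t)
    have h1 : HasDerivAt (fun x' => fderiv ℝ F (x', t))
        (fderiv ℝ (fderiv ℝ F) (x, t) (1, 0)) x := by
      have := (hF'd (x, t)).hasFDerivAt.comp_hasDerivAt x hg
      exact this
    have := h1.clm_apply (hasDerivAt_const x ((0 : ℝ), (1 : ℝ)))
    simpa using this
  have hsymm : fderiv ℝ (fderiv ℝ F) (x, t) (1, 0) (0, 1)
      = fderiv ℝ (fderiv ℝ F) (x, t) (0, 1) (1, 0) :=
    second_derivative_symmetric (fun y => (hFd y).hasFDerivAt)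
      ((hF'd (x, t)).hasFDerivAt) _ _
  set w : Fin n → ℝ := fderiv ℝ (fderiv ℝ F) (x, t) (0, 1) (1, 0) with hw
  -- derivatives of components
  have hzt : HasDerivAt (fun t' => z x t') (ptv z x t) t := by rw [hptv x t]; exact ht x t
  have hzx : HasDerivAt (fun x' => z x' t) (pxv z x t) x := by rw [hpxv x t]; exact hx x t
  have hSd : Differentiable ℝ S := hS.differentiable (by simp)
  have hSt : HasDerivAt (fun t' => S (z x t')) (fderiv ℝ S (z x t) (ptv z x t)) t := by
    have := (hSd (z x t)).hasFDerivAt.comp_hasDerivAt t hzt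
    exact this
  have hu : HasDerivAt (fun t' => pxv z x t') w t := by
    simp only [hpxv]; exact hxt
  have hu2 : HasDerivAt (fun x' => ptv z x' t) w x := by
    simp only [hptv]; exact hsymm ▸ htx
  have hdot_t : HasDerivAt (fun t' => pxv z x t' ⬝ᵥ K.mulVec (z x t'))
      (w ⬝ᵥ K.mulVec (z x t) + pxv z x t ⬝ᵥ K.mulVec (ptv z x t)) t :=
    hasDerivAt_dotmul K hu hzt
  have hdot_x : HasDerivAt (fun x' => ptv z x' t ⬝ᵥ K.mulVec (z x' t))
      (w ⬝ᵥ K.mulVec (z x t) + ptv z x t ⬝ᵥ K.mulVec (pxv z x t)) x :=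
    hasDerivAt_dotmul K hu2 hzx
  have hE : HasDerivAt (fun t' => S (z x t') + (1/2 : ℝ) * (pxv z x t' ⬝ᵥ K.mulVec (z x t')))
      (fderiv ℝ S (z x t) (ptv z x t)
        + (1/2 : ℝ) * (w ⬝ᵥ K.mulVec (z x t) + pxv z x t ⬝ᵥ K.mulVec (ptv z x t))) t :=
    hSt.add (hdot_t.const_mul (1/2 : ℝ))
  have hFx : HasDerivAt (fun x' => -(1/2 : ℝ) * (ptv z x' t ⬝ᵥ K.mulVec (z x' t)))
      (-(1/2 : ℝ) * (w ⬝ᵥ K.mulVec (z x t) + ptv z x t ⬝ᵥ K.mulVec (pxv z x t))) x :=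
    hdot_x.const_mul (-(1/2 : ℝ))
  have e1 : pt (fun x t => S (z x t) + (1/2 : ℝ) * (pxv z x t ⬝ᵥ K.mulVec (z x t))) x t
      = fderiv ℝ S (z x t) (ptv z x t)
        + (1/2 : ℝ) * (w ⬝ᵥ K.mulVec (z x t) + pxv z x t ⬝ᵥ K.mulVec (ptv z x t)) := by
    simpa [pt] using hE.deriv
  have e2 : px (fun x t => -(1/2 : ℝ) * (ptv z x t ⬝ᵥ K.mulVec (z x t))) x t
      = -(1/2 : ℝ) * (w ⬝ᵥ K.mulVec (z x t) + ptv z x t ⬝ᵥ K.mulVec (pxv z x t)) := by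
    simpa [px] using hFx.deriv
  -- chain rule for S evaluated via hms
  have hA : fderiv ℝ S (z x t) (ptv z x t)
      = ptv z x t ⬝ᵥ M.mulVec (ptv z x t) + ptv z x t ⬝ᵥ K.mulVec (pxv z x t) := by
    have hv : (ptv z x t : Fin n → ℝ) = ∑ i, ptv z x t i • (Pi.single i 1 : Fin n → ℝ) := by
      funext j
      rw [Finset.sum_apply]
      simp [Pi.single_apply]
    calc fderiv ℝ S (z x t) (ptv z x t)
        = ∑ i, ptv z x t i * fderiv ℝ S (z x t) (Pi.single i 1) := by
          conv_lhs => rw [hv]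
          rw [map_sum]
          simp [smul_eq_mul]
      _ = ∑ i, ptv z x t i * (M.mulVec (ptv z x t) + K.mulVec (pxv z x t)) i := by
          simp only [← hms x t]
      _ = _ := by
          simp [dotProduct, Pi.add_apply, mul_add, Finset.sum_add_distrib]
  have skew_self : ∀ u : Fin n → ℝ, u ⬝ᵥ M.mulVec u = 0 := by
    intro u
    have h1 : u ⬝ᵥ M.mulVec u = -(u ⬝ᵥ M.mulVec u) := by
      conv_lhs => rw [dotProduct_mulVec, ← Matrix.mulVec_transpose, hM, Matrix.neg_mulVec,
        neg_dotProduct, dotProduct_comm]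
    linarith
  have skew_swap : ∀ u v : Fin n → ℝ, u ⬝ᵥ K.mulVec v = -(v ⬝ᵥ K.mulVec u) := by
    intro u v
    conv_lhs => rw [dotProduct_mulVec, ← Matrix.mulVec_transpose, hK, Matrix.neg_mulVec,
      neg_dotProduct, dotProduct_comm]
  rw [e1, e2, hA]
  have h3 := skew_self (ptv z x t)
  have h4 := skew_swap (pxv z x t) (ptv z x t)
  linarith
end

section
/- For any smooth vector-valued function z : ℝ² → ℝⁿ, any skew-symmetric constant matrices M, K ∈ ℝ^{n×n}, and any smooth S : ℝⁿ → ℝ such that M·z_t + K·z_x = ∇S(z), the local momentum conservation law ∂_t I + ∂_x G = 0 holds, where I(z) = −(1/2) z_x · (M z) and G(z) = S(z) + (1/2) z_t · (M z). -/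
open Matrix

private lemma hasDerivAt_dotP {n : ℕ} {V W : ℝ → Fin n → ℝ} {V' W' : Fin n → ℝ} {t : ℝ}
    (hV : HasDerivAt V V' t) (hW : HasDerivAt W W' t) :
    HasDerivAt (fun s => V s ⬝ᵥ W s) (V' ⬝ᵥ W t + V t ⬝ᵥ W') t := by
  have h : ∀ i ∈ Finset.univ, HasDerivAt (fun s => V s i * W s i)
      (V' i * W t i + V t i * W' i) t :=
    fun i _ => (hasDerivAt_pi.1 hV i).mul (hasDerivAt_pi.1 hW i)
  have := HasDerivAt.fun_sum h
  simpa [dotProduct, Finset.sum_add_distrib] using this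

private lemma hasDerivAt_mulVec {n : ℕ} (M : Matrix (Fin n) (Fin n) ℝ)
    {V : ℝ → Fin n → ℝ} {V' : Fin n → ℝ} {t : ℝ} (hV : HasDerivAt V V' t) :
    HasDerivAt (fun s => M.mulVec (V s)) (M.mulVec V') t := by
  have := ((LinearMap.toContinuousLinearMap M.mulVecLin).hasFDerivAt
    (x := V t)).comp_hasDerivAt t hV
  simpa [Function.comp_def, Matrix.mulVecLin_apply] using this

private lemma skew_dot {n : ℕ} {Q : Matrix (Fin n) (Fin n) ℝ} (hQ : Qᵀ = -Q)
    (u v : Fin n → ℝ) : u ⬝ᵥ Q.mulVec v = -(v ⬝ᵥ Q.mulVec u) := by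
  have h1 : vecMul u Q = Qᵀ.mulVec u := (Matrix.mulVec_transpose Q u).symm
  rw [Matrix.dotProduct_mulVec, h1, hQ, Matrix.neg_mulVec, neg_dotProduct,
    dotProduct_comm]

/-- Local momentum conservation law for a multi-symplectic PDE system
    M z_t + K z_x = ∇S(z): with I = −(1/2)⟨z_x, M z⟩ and
    G = S(z) + (1/2)⟨z_t, M z⟩ one has ∂_t I + ∂_x G = 0. -/
theorem multisymplectic_momentum_conservation
    (n : ℕ) (M K : Matrix (Fin n) (Fin n) ℝ)
    (hM : Mᵀ = -M) (hK : Kᵀ = -K)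
    (S : (Fin n → ℝ) → ℝ) (hS : ContDiff ℝ (⊤ : ℕ∞) S)
    (z : ℝ → ℝ → (Fin n → ℝ))
    (hz : ContDiff ℝ (⊤ : ℕ∞) (fun p : ℝ × ℝ => z p.1 p.2))
    (hms : ∀ x t i,
      (M.mulVec (ptv z x t) + K.mulVec (pxv z x t)) i
        = fderiv ℝ S (z x t) (Pi.single i 1)) :
    ∀ x t,
      pt (fun x t => -(1/2 : ℝ) * (pxv z x t ⬝ᵥ M.mulVec (z x t))) x t
        + px (fun x t => S (z x t) + (1/2 : ℝ) * (ptv z x t ⬝ᵥ M.mulVec (z x t))) x t = 0 := by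
  intro x t
  have hZ : ContDiff ℝ (⊤ : ℕ∞) (fun p : ℝ × ℝ => z p.1 p.2) := hz
  set Z : ℝ × ℝ → (Fin n → ℝ) := fun p => z p.1 p.2 with hZdef
  have hZd : Differentiable ℝ Z := hZ.differentiable (by simp)
  have hFd : Differentiable ℝ (fderiv ℝ Z) := (hZ.fderiv_right (m := (⊤ : ℕ∞)) (by simp)).differentiable (by simp)
  have hct : ∀ a b : ℝ, HasDerivAt (fun s => ((a, s) : ℝ × ℝ)) (0, 1) b :=
    fun a b => HasDerivAt.prodMk (hasDerivAt_const b a) (hasDerivAt_id b)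
  have hcx : ∀ a b : ℝ, HasDerivAt (fun s => ((s, b) : ℝ × ℝ)) (1, 0) a :=
    fun a b => HasDerivAt.prodMk (hasDerivAt_id a) (hasDerivAt_const a b)
  -- identify the partial derivatives
  have hZta : ∀ a b : ℝ, HasDerivAt (fun s => Z (a, s)) (fderiv ℝ Z (a, b) (0, 1)) b :=
    fun a b => (hZd (a, b)).hasFDerivAt.comp_hasDerivAt b (hct a b)
  have hZxa : ∀ a b : ℝ, HasDerivAt (fun s => Z (s, b)) (fderiv ℝ Z (a, b) (1, 0)) a :=
    fun a b => by have := (hZd (a, b)).hasFDerivAt.comp_hasDerivAt a (hcx a b); exact this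
  have hpxv : ∀ a b : ℝ, pxv z a b = fderiv ℝ Z (a, b) (1, 0) := fun a b => (hZxa a b).deriv
  have hptv : ∀ a b : ℝ, ptv z a b = fderiv ℝ Z (a, b) (0, 1) := fun a b => (hZta a b).deriv
  set zx := fderiv ℝ Z (x, t) (1, 0) with hzx
  set zt := fderiv ℝ Z (x, t) (0, 1) with hzt
  set A := fderiv ℝ (fderiv ℝ Z) (x, t) with hA
  set w := A (0, 1) (1, 0) with hw
  have hsymm : A (1, 0) (0, 1) = w := (hZ.contDiffAt.isSymmSndFDerivAt (by simp; exact WithTop.coe_le_coe.2 (le_top : (2 : ℕ∞) ≤ ⊤))) (1, 0) (0, 1)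
  -- second derivatives of the partials
  have hFt : HasDerivAt (fun s => fderiv ℝ Z (x, s)) (A (0, 1)) t :=
    (hFd (x, t)).hasFDerivAt.comp_hasDerivAt t (hct x t)
  have hFx : HasDerivAt (fun s => fderiv ℝ Z (s, t)) (A (1, 0)) x :=
    (hFd (x, t)).hasFDerivAt.comp_hasDerivAt x (hcx x t)
  have hFxt : HasDerivAt (fun s => fderiv ℝ Z (x, s) (1, 0)) w t := by
    simpa using hFt.clm_apply (hasDerivAt_const t ((1, 0) : ℝ × ℝ))
  have hFtx : HasDerivAt (fun s => fderiv ℝ Z (s, t) (0, 1)) w x := by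
    have := hFx.clm_apply (hasDerivAt_const x ((0, 1) : ℝ × ℝ))
    simpa [hsymm] using this
  -- derivative of I along t
  have hIcurve : HasDerivAt (fun t' => -(1/2 : ℝ) * (pxv z x t' ⬝ᵥ M.mulVec (z x t')))
      (-(1/2 : ℝ) * (w ⬝ᵥ M.mulVec (z x t) + zx ⬝ᵥ M.mulVec zt)) t := by
    have hdot : HasDerivAt (fun s => (fderiv ℝ Z (x, s) (1, 0)) ⬝ᵥ M.mulVec (Z (x, s)))
        (w ⬝ᵥ M.mulVec (Z (x, t)) + zx ⬝ᵥ M.mulVec zt) t :=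
      hasDerivAt_dotP hFxt (hasDerivAt_mulVec M (hZta x t))
    have heq : (fun t' => -(1/2 : ℝ) * (pxv z x t' ⬝ᵥ M.mulVec (z x t')))
        = fun s => -(1/2 : ℝ) * ((fderiv ℝ Z (x, s) (1, 0)) ⬝ᵥ M.mulVec (Z (x, s))) := by
      funext s; rw [hpxv x s]
    rw [heq]
    exact hdot.const_mul (-(1/2 : ℝ))
  -- derivative of G along x
  have hGcurve : HasDerivAt
      (fun x' => S (z x' t) + (1/2 : ℝ) * (ptv z x' t ⬝ᵥ M.mulVec (z x' t)))
      (fderiv ℝ S (z x t) zx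
        + (1/2 : ℝ) * (w ⬝ᵥ M.mulVec (z x t) + zt ⬝ᵥ M.mulVec zx)) x := by
    have hScurve : HasDerivAt (fun x' => S (Z (x', t))) (fderiv ℝ S (z x t) zx) x :=
      ((hS.differentiable (by simp) (Z (x, t))).hasFDerivAt).comp_hasDerivAt x (hZxa x t)
    have hdot : HasDerivAt (fun s => (fderiv ℝ Z (s, t) (0, 1)) ⬝ᵥ M.mulVec (Z (s, t)))
        (w ⬝ᵥ M.mulVec (Z (x, t)) + zt ⬝ᵥ M.mulVec zx) x :=
      hasDerivAt_dotP hFtx (hasDerivAt_mulVec M (hZxa x t))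
    have heq : (fun x' => S (z x' t) + (1/2 : ℝ) * (ptv z x' t ⬝ᵥ M.mulVec (z x' t)))
        = fun s => S (Z (s, t)) + (1/2 : ℝ) * ((fderiv ℝ Z (s, t) (0, 1)) ⬝ᵥ M.mulVec (Z (s, t))) := by
      funext s; rw [hptv s t]
    rw [heq]
    exact hScurve.add (hdot.const_mul (1/2 : ℝ))
  -- compute the gradient term
  have hgrad : fderiv ℝ S (z x t) zx = zx ⬝ᵥ M.mulVec zt + zx ⬝ᵥ K.mulVec zx := by
    have hrep : zx = ∑ i, zx i • (Pi.single i 1 : Fin n → ℝ) := by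
      conv_lhs => rw [pi_eq_sum_univ zx]
      refine Finset.sum_congr rfl fun i _ => ?_
      congr 1
      funext j
      simp [Pi.single_apply, eq_comm]
    calc fderiv ℝ S (z x t) zx
        = ∑ i, zx i * fderiv ℝ S (z x t) (Pi.single i 1) := by
          conv_lhs => rw [hrep]
          rw [map_sum]
          simp [smul_eq_mul]
      _ = ∑ i, zx i * (M.mulVec (ptv z x t) + K.mulVec (pxv z x t)) i := by
          refine Finset.sum_congr rfl fun i _ => ?_
          rw [hms x t i]
      _ = zx ⬝ᵥ (M.mulVec zt + K.mulVec zx) := by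
          rw [hptv x t, hpxv x t]
          rfl
      _ = zx ⬝ᵥ M.mulVec zt + zx ⬝ᵥ K.mulVec zx := dotProduct_add _ _ _
  have hKzero : zx ⬝ᵥ K.mulVec zx = 0 := by
    have := skew_dot hK zx zx
    linarith
  have hMskew : zt ⬝ᵥ M.mulVec zx = -(zx ⬝ᵥ M.mulVec zt) := skew_dot hM zt zx
  show pt _ x t + px _ x t = 0
  rw [pt, px]
  rw [hIcurve.deriv, hGcurve.deriv, hgrad, hKzero, hMskew]
  ring
end

section
/- If smooth functions h, u : ℝ² → ℝ with h > 0 satisfy the Serre equations h_t + (h u)_x = 0 and u_t + u u_x + g h_x + (1/3) h^{-1} ∂_x[h² γ] = 0 with γ = h(u_x² − u_{xt} − u u_{xx}), then the momentum flux conservation law ∂_t[h u] + ∂_x[h u² + (1/2) g h² + (1/3) h² γ] = 0 holds. -/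
/-- Vertical acceleration at the free surface: γ = h(u_x² − u_{xt} − u u_{xx}). -/
noncomputable def gam (h u : ℝ → ℝ → ℝ) : ℝ → ℝ → ℝ :=
  fun x t => h x t * ((px u x t)^2 - px (pt u) x t - u x t * px (px u) x t)


lemma hasDerivAt_slice_x (f : ℝ → ℝ → ℝ)
    (hf : ContDiff ℝ (⊤ : ℕ∞) (fun p : ℝ × ℝ => f p.1 p.2)) (x t : ℝ) :
    HasDerivAt (fun x' => f x' t)
      (fderiv ℝ (fun p : ℝ × ℝ => f p.1 p.2) (x, t) (1, 0)) x := by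
  have h1 : HasDerivAt (fun x' : ℝ => (x', t)) ((1 : ℝ), (0 : ℝ)) x :=
    (hasDerivAt_id x).prodMk (hasDerivAt_const x t)
  have h2 := (hf.differentiable (by simp) (x, t)).hasFDerivAt
  exact h2.comp_hasDerivAt x h1

lemma hasDerivAt_slice_t (f : ℝ → ℝ → ℝ)
    (hf : ContDiff ℝ (⊤ : ℕ∞) (fun p : ℝ × ℝ => f p.1 p.2)) (x t : ℝ) :
    HasDerivAt (fun t' => f x t')
      (fderiv ℝ (fun p : ℝ × ℝ => f p.1 p.2) (x, t) (0, 1)) t := by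
  have h1 : HasDerivAt (fun t' : ℝ => (x, t')) ((0 : ℝ), (1 : ℝ)) t :=
    (hasDerivAt_const t x).prodMk (hasDerivAt_id t)
  have h2 := (hf.differentiable (by simp) (x, t)).hasFDerivAt
  exact h2.comp_hasDerivAt t h1

lemma hasDerivAt_px (f : ℝ → ℝ → ℝ)
    (hf : ContDiff ℝ (⊤ : ℕ∞) (fun p : ℝ × ℝ => f p.1 p.2)) (x t : ℝ) :
    HasDerivAt (fun x' => f x' t) (px f x t) x := by
  have h1 := hasDerivAt_slice_x f hf x t
  have : px f x t = fderiv ℝ (fun p : ℝ × ℝ => f p.1 p.2) (x, t) (1, 0) := h1.deriv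
  rw [this]; exact h1

lemma hasDerivAt_pt (f : ℝ → ℝ → ℝ)
    (hf : ContDiff ℝ (⊤ : ℕ∞) (fun p : ℝ × ℝ => f p.1 p.2)) (x t : ℝ) :
    HasDerivAt (fun t' => f x t') (pt f x t) t := by
  have h1 := hasDerivAt_slice_t f hf x t
  have : pt f x t = fderiv ℝ (fun p : ℝ × ℝ => f p.1 p.2) (x, t) (0, 1) := h1.deriv
  rw [this]; exact h1

lemma contDiff_px (f : ℝ → ℝ → ℝ)
    (hf : ContDiff ℝ (⊤ : ℕ∞) (fun p : ℝ × ℝ => f p.1 p.2)) :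
    ContDiff ℝ (⊤ : ℕ∞) (fun p : ℝ × ℝ => px f p.1 p.2) := by
  have e : (fun p : ℝ × ℝ => px f p.1 p.2)
      = fun p => fderiv ℝ (fun q : ℝ × ℝ => f q.1 q.2) p (1, 0) := by
    funext p
    have := (hasDerivAt_slice_x f hf p.1 p.2).deriv
    simpa [px] using this
  rw [e]
  exact (hf.fderiv_right (by simp)).clm_apply contDiff_const

lemma contDiff_pt (f : ℝ → ℝ → ℝ)
    (hf : ContDiff ℝ (⊤ : ℕ∞) (fun p : ℝ × ℝ => f p.1 p.2)) :
    ContDiff ℝ (⊤ : ℕ∞) (fun p : ℝ × ℝ => pt f p.1 p.2) := by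
  have e : (fun p : ℝ × ℝ => pt f p.1 p.2)
      = fun p => fderiv ℝ (fun q : ℝ × ℝ => f q.1 q.2) p (0, 1) := by
    funext p
    have := (hasDerivAt_slice_t f hf p.1 p.2).deriv
    simpa [pt] using this
  rw [e]
  exact (hf.fderiv_right (by simp)).clm_apply contDiff_const

/-- Momentum flux conservation for the Serre--Green--Naghdi equations. -/
theorem serre_momentum_flux
    (g : ℝ) (hg : 0 < g) (h u : ℝ → ℝ → ℝ)
    (hh : ContDiff ℝ (⊤ : ℕ∞) (fun p : ℝ × ℝ => h p.1 p.2))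
    (hu : ContDiff ℝ (⊤ : ℕ∞) (fun p : ℝ × ℝ => u p.1 p.2))
    (hpos : ∀ x t, 0 < h x t)
    (hmass : ∀ x t, pt h x t + px (fun x t => h x t * u x t) x t = 0)
    (hmom : ∀ x t, pt u x t + u x t * px u x t + g * px h x t
      + (1/3 : ℝ) * (h x t)⁻¹ * px (fun x t => (h x t)^2 * gam h u x t) x t = 0) :
    ∀ x t,
      pt (fun x t => h x t * u x t) x t
        + px (fun x t => h x t * (u x t)^2 + (1/2 : ℝ) * g * (h x t)^2
            + (1/3 : ℝ) * (h x t)^2 * gam h u x t) x t = 0 := by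
  -- smoothness of gam and of h² * gam
  have hgam : ContDiff ℝ (⊤ : ℕ∞) (fun p : ℝ × ℝ => gam h u p.1 p.2) := by
    have h1 := contDiff_px u hu
    have h2 := contDiff_px (pt u) (contDiff_pt u hu)
    have h3 := contDiff_px (px u) h1
    exact hh.mul (((h1.pow 2).sub h2).sub (hu.mul h3))
  have hq : ContDiff ℝ (⊤ : ℕ∞)
      (fun p : ℝ × ℝ => (h p.1 p.2)^2 * gam h u p.1 p.2) :=
    (hh.pow 2).mul hgam
  intro x t
  have hne : h x t ≠ 0 := (hpos x t).ne'
  have Hhx := hasDerivAt_px h hh x t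
  have Hux := hasDerivAt_px u hu x t
  have Hht := hasDerivAt_pt h hh x t
  have Hut := hasDerivAt_pt u hu x t
  have Hqx := hasDerivAt_px (fun x t => (h x t)^2 * gam h u x t) hq x t
  have e1 : pt (fun x t => h x t * u x t) x t
      = pt h x t * u x t + h x t * pt u x t := (Hht.mul Hut).deriv
  have e2 : px (fun x t => h x t * u x t) x t
      = px h x t * u x t + h x t * px u x t := (Hhx.mul Hux).deriv
  have hfun : (fun x t => h x t * (u x t)^2 + (1/2 : ℝ) * g * (h x t)^2
        + (1/3 : ℝ) * (h x t)^2 * gam h u x t)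
      = (fun x t => h x t * (u x t)^2 + ((1/2 : ℝ) * g) * (h x t)^2
        + (1/3 : ℝ) * ((h x t)^2 * gam h u x t)) := by
    funext a b; ring
  have e3 : px (fun x t => h x t * (u x t)^2 + ((1/2 : ℝ) * g) * (h x t)^2
        + (1/3 : ℝ) * ((h x t)^2 * gam h u x t)) x t
      = (px h x t * (u x t)^2 + h x t * ((2:ℕ) * (u x t)^(2-1) * px u x t)
        + ((1/2 : ℝ) * g) * ((2:ℕ) * (h x t)^(2-1) * px h x t))
        + (1/3 : ℝ) * px (fun x t => (h x t)^2 * gam h u x t) x t :=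
    (((Hhx.mul (Hux.pow 2)).add ((Hhx.pow 2).const_mul ((1/2 : ℝ) * g))).add
      (Hqx.const_mul (1/3 : ℝ))).deriv
  rw [hfun, e1, e3]
  have M1 := hmass x t
  rw [e2] at M1
  have M2 := hmom x t
  have hinv : h x t * (h x t)⁻¹ = 1 := mul_inv_cancel₀ hne
  push_cast
  linear_combination u x t * M1 + h x t * M2
    - (1/3 : ℝ) * px (fun x t => (h x t)^2 * gam h u x t) x t * hinv
end

section
/- If smooth functions h, u : ℝ² → ℝ with h > 0 satisfy the Serre equations, then the energy conservation law ∂_t[(1/2) h u² + (1/6) h³ u_x² + (1/2) g h²] + ∂_x[((1/2) u² + (1/6) h² u_x² + g h + (1/3) h γ) h u] = 0 holds. -/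
namespace SerreAux

/-- Joint smoothness of a curried function. -/
def Sm (f : ℝ → ℝ → ℝ) : Prop := ContDiff ℝ (⊤ : ℕ∞) (fun p : ℝ × ℝ => f p.1 p.2)

lemma Sm.diffx {f : ℝ → ℝ → ℝ} (hf : Sm f) (x t : ℝ) :
    DifferentiableAt ℝ (fun x' => f x' t) x := by
  have : (fun x' : ℝ => f x' t) =
      (fun p : ℝ × ℝ => f p.1 p.2) ∘ (fun x' : ℝ => (x', t)) := rfl
  rw [this]
  exact ((hf.differentiable (by simp)).comp
    ((differentiable_id).prodMk (differentiable_const t))).differentiableAt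

lemma Sm.difft {f : ℝ → ℝ → ℝ} (hf : Sm f) (x t : ℝ) :
    DifferentiableAt ℝ (fun t' => f x t') t := by
  have : (fun t' : ℝ => f x t') =
      (fun p : ℝ × ℝ => f p.1 p.2) ∘ (fun t' : ℝ => (x, t')) := rfl
  rw [this]
  exact ((hf.differentiable (by simp)).comp
    ((differentiable_const x).prodMk differentiable_id)).differentiableAt

lemma Sm.hdx {f : ℝ → ℝ → ℝ} (hf : Sm f) (x t : ℝ) :
    HasDerivAt (fun x' => f x' t) (px f x t) x := (hf.diffx x t).hasDerivAt

lemma Sm.hdt {f : ℝ → ℝ → ℝ} (hf : Sm f) (x t : ℝ) :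
    HasDerivAt (fun t' => f x t') (pt f x t) t := (hf.difft x t).hasDerivAt

lemma Sm.mul {f g : ℝ → ℝ → ℝ} (hf : Sm f) (hg : Sm g) :
    Sm (fun x t => f x t * g x t) := ContDiff.mul hf hg

lemma Sm.add {f g : ℝ → ℝ → ℝ} (hf : Sm f) (hg : Sm g) :
    Sm (fun x t => f x t + g x t) := ContDiff.add hf hg

lemma Sm.sub {f g : ℝ → ℝ → ℝ} (hf : Sm f) (hg : Sm g) :
    Sm (fun x t => f x t - g x t) := ContDiff.sub hf hg

lemma Sm.pow {f : ℝ → ℝ → ℝ} (hf : Sm f) (n : ℕ) :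
    Sm (fun x t => (f x t) ^ n) := ContDiff.pow hf n

lemma px_eq_fderiv {f : ℝ → ℝ → ℝ} (hf : Sm f) (x t : ℝ) :
    px f x t = fderiv ℝ (fun p : ℝ × ℝ => f p.1 p.2) (x, t) (1, 0) := by
  have h1 : HasDerivAt (fun x' : ℝ => ((x', t) : ℝ × ℝ)) ((1 : ℝ), (0 : ℝ)) x := by
    simpa using HasDerivAt.prodMk (hasDerivAt_id x) (hasDerivAt_const x t)
  have h2 : HasDerivAt (fun x' => f x' t)
      (fderiv ℝ (fun p : ℝ × ℝ => f p.1 p.2) (x, t) (1, 0)) x :=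
    by have := (((hf.differentiable (by simp)) (x, t)).hasFDerivAt).comp_hasDerivAt x h1; exact this
  exact h2.deriv ▸ rfl

lemma pt_eq_fderiv {f : ℝ → ℝ → ℝ} (hf : Sm f) (x t : ℝ) :
    pt f x t = fderiv ℝ (fun p : ℝ × ℝ => f p.1 p.2) (x, t) (0, 1) := by
  have h1 : HasDerivAt (fun t' : ℝ => ((x, t') : ℝ × ℝ)) ((0 : ℝ), (1 : ℝ)) t := by
    simpa using HasDerivAt.prodMk (hasDerivAt_const t x) (hasDerivAt_id t)
  have h2 : HasDerivAt (fun t' => f x t')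
      (fderiv ℝ (fun p : ℝ × ℝ => f p.1 p.2) (x, t) (0, 1)) t :=
    by have := (((hf.differentiable (by simp)) (x, t)).hasFDerivAt).comp_hasDerivAt t h1; exact this
  exact h2.deriv ▸ rfl

lemma Sm.dx {f : ℝ → ℝ → ℝ} (hf : Sm f) : Sm (_root_.px f) := by
  have h1 : ContDiff ℝ (⊤ : ℕ∞)
      (fun p : ℝ × ℝ => fderiv ℝ (fun q : ℝ × ℝ => f q.1 q.2) p ((1 : ℝ), (0 : ℝ))) :=
    (hf.fderiv_right (by simp)).clm_apply contDiff_const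
  have h2 : (fun p : ℝ × ℝ => _root_.px f p.1 p.2) =
      (fun p : ℝ × ℝ => fderiv ℝ (fun q : ℝ × ℝ => f q.1 q.2) p ((1 : ℝ), (0 : ℝ))) :=
    funext fun p => px_eq_fderiv hf p.1 p.2
  show ContDiff ℝ (⊤ : ℕ∞) _
  rw [h2]; exact h1

lemma Sm.dt {f : ℝ → ℝ → ℝ} (hf : Sm f) : Sm (_root_.pt f) := by
  have h1 : ContDiff ℝ (⊤ : ℕ∞)
      (fun p : ℝ × ℝ => fderiv ℝ (fun q : ℝ × ℝ => f q.1 q.2) p ((0 : ℝ), (1 : ℝ))) :=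
    (hf.fderiv_right (by simp)).clm_apply contDiff_const
  have h2 : (fun p : ℝ × ℝ => _root_.pt f p.1 p.2) =
      (fun p : ℝ × ℝ => fderiv ℝ (fun q : ℝ × ℝ => f q.1 q.2) p ((0 : ℝ), (1 : ℝ))) :=
    funext fun p => pt_eq_fderiv hf p.1 p.2
  show ContDiff ℝ (⊤ : ℕ∞) _
  rw [h2]; exact h1

lemma fderiv_apply_const {F : ℝ × ℝ → ℝ} (hF : ContDiff ℝ (⊤ : ℕ∞) F) (p : ℝ × ℝ)
    (v w : ℝ × ℝ) :
    fderiv ℝ (fun q => fderiv ℝ F q v) p w = fderiv ℝ (fderiv ℝ F) p w v := by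
  have hc : DifferentiableAt ℝ (fderiv ℝ F) p :=
    ((hF.fderiv_right (m := 1) (by exact WithTop.coe_le_coe.mpr le_top)).differentiable (by simp)) p
  have := fderiv_clm_apply (c := fderiv ℝ F) (u := fun _ : ℝ × ℝ => v) hc
    (differentiableAt_const v)
  rw [this]
  simp

lemma clairaut {f : ℝ → ℝ → ℝ} (hf : Sm f) (x t : ℝ) :
    _root_.pt (px f) x t = px (_root_.pt f) x t := by
  have e1 : (fun p : ℝ × ℝ => _root_.px f p.1 p.2) =
      (fun p : ℝ × ℝ => fderiv ℝ (fun q : ℝ × ℝ => f q.1 q.2) p ((1 : ℝ), (0 : ℝ))) :=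
    funext fun p => px_eq_fderiv hf p.1 p.2
  have e2 : (fun p : ℝ × ℝ => _root_.pt f p.1 p.2) =
      (fun p : ℝ × ℝ => fderiv ℝ (fun q : ℝ × ℝ => f q.1 q.2) p ((0 : ℝ), (1 : ℝ))) :=
    funext fun p => pt_eq_fderiv hf p.1 p.2
  have symm : IsSymmSndFDerivAt ℝ (fun q : ℝ × ℝ => f q.1 q.2) (x, t) :=
    (hf.contDiffAt).isSymmSndFDerivAt (by rw [minSmoothness_of_isRCLikeNormedField]; exact WithTop.coe_le_coe.mpr (le_top : (2:ℕ∞) ≤ ⊤))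
  calc _root_.pt (px f) x t
      = fderiv ℝ (fun p : ℝ × ℝ => _root_.px f p.1 p.2) (x, t) (0, 1) :=
        pt_eq_fderiv hf.dx x t
    _ = fderiv ℝ (fun p : ℝ × ℝ =>
          fderiv ℝ (fun q : ℝ × ℝ => f q.1 q.2) p ((1 : ℝ), (0 : ℝ))) (x, t) (0, 1) := by
        rw [e1]
    _ = fderiv ℝ (fderiv ℝ (fun q : ℝ × ℝ => f q.1 q.2)) (x, t) (0, 1) (1, 0) :=
        fderiv_apply_const hf (x, t) _ _
    _ = fderiv ℝ (fderiv ℝ (fun q : ℝ × ℝ => f q.1 q.2)) (x, t) (1, 0) (0, 1) :=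
        symm _ _
    _ = fderiv ℝ (fun p : ℝ × ℝ =>
          fderiv ℝ (fun q : ℝ × ℝ => f q.1 q.2) p ((0 : ℝ), (1 : ℝ))) (x, t) (1, 0) :=
        (fderiv_apply_const hf (x, t) _ _).symm
    _ = fderiv ℝ (fun p : ℝ × ℝ => _root_.pt f p.1 p.2) (x, t) (1, 0) := by rw [e2]
    _ = px (_root_.pt f) x t := (px_eq_fderiv hf.dt x t).symm

end SerreAux

/-- Energy conservation for the Serre--Green--Naghdi equations. -/
theorem serre_energy_conservation
    (g : ℝ) (hg : 0 < g) (h u : ℝ → ℝ → ℝ)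
    (hh : ContDiff ℝ (⊤ : ℕ∞) (fun p : ℝ × ℝ => h p.1 p.2))
    (hu : ContDiff ℝ (⊤ : ℕ∞) (fun p : ℝ × ℝ => u p.1 p.2))
    (hpos : ∀ x t, 0 < h x t)
    (hmass : ∀ x t, pt h x t + px (fun x t => h x t * u x t) x t = 0)
    (hmom : ∀ x t, pt u x t + u x t * px u x t + g * px h x t
      + (1/3 : ℝ) * (h x t)⁻¹ * px (fun x t => (h x t)^2 * gam h u x t) x t = 0) :
    ∀ x t,
      pt (fun x t => (1/2 : ℝ) * h x t * (u x t)^2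
          + (1/6 : ℝ) * (h x t)^3 * (px u x t)^2 + (1/2 : ℝ) * g * (h x t)^2) x t
        + px (fun x t =>
            ((1/2 : ℝ) * (u x t)^2 + (1/6 : ℝ) * (h x t)^2 * (px u x t)^2
              + g * h x t + (1/3 : ℝ) * h x t * gam h u x t) * (h x t * u x t)) x t = 0 := by
  intro x t
  have Smh : SerreAux.Sm h := hh
  have Smu : SerreAux.Sm u := hu
  have Smux : SerreAux.Sm (px u) := Smu.dx
  have Smut : SerreAux.Sm (pt u) := Smu.dt
  have Smuxx : SerreAux.Sm (px (px u)) := Smux.dx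
  have Smuxt : SerreAux.Sm (px (pt u)) := Smut.dx
  have Smg : SerreAux.Sm (gam h u) :=
    Smh.mul (((Smux.pow 2).sub Smuxt).sub (Smu.mul Smuxx))
  have SmW : SerreAux.Sm (fun x t => (h x t)^2 * gam h u x t) := (Smh.pow 2).mul Smg
  -- abbreviations
  set H := h x t with hH
  set U := u x t with hU
  set Hx := px h x t with hHx
  set Ht := pt h x t with hHt
  set Ux := px u x t with hUx
  set Ut := pt u x t with hUt
  set Uxx := px (px u) x t with hUxx
  set Uxt := px (pt u) x t with hUxt
  set G := gam h u x t with hGdef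
  set K := px (fun x t => (h x t)^2 * gam h u x t) x t with hK
  -- time derivative of the energy density
  have EptE : pt (fun x t => (1/2 : ℝ) * h x t * (u x t)^2
      + (1/6 : ℝ) * (h x t)^3 * (px u x t)^2 + (1/2 : ℝ) * g * (h x t)^2) x t
      = (1/2)*Ht*U^2 + H*U*Ut + (1/2)*H^2*Ht*Ux^2
        + (1/3)*H^3*Ux*(pt (px u) x t) + g*H*Ht := by
    have h1 : HasDerivAt (fun t' => (1/2 : ℝ) * h x t' * (u x t')^2
        + (1/6 : ℝ) * (h x t')^3 * (px u x t')^2 + (1/2 : ℝ) * g * (h x t')^2)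
        ((1/2)*Ht*U^2 + H*U*Ut + (1/2)*H^2*Ht*Ux^2
          + (1/3)*H^3*Ux*(pt (px u) x t) + g*H*Ht) t := by
      have A1 := ((Smh.hdt x t).const_mul (1/2 : ℝ)).mul ((Smu.hdt x t).pow 2)
      have A2 := (((Smh.hdt x t).pow 3).const_mul (1/6 : ℝ)).mul ((Smux.hdt x t).pow 2)
      have A3 := ((Smh.hdt x t).pow 2).const_mul ((1/2 : ℝ) * g)
      have A4 := (A1.add A2).add A3
      refine A4.congr_deriv ?_
      simp only [Pi.pow_apply]
      ring
    exact h1.deriv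
  rw [EptE, SerreAux.clairaut hu x t]
  -- rewrite the flux in a convenient form
  have hFeq : (fun x t =>
      ((1/2 : ℝ) * (u x t)^2 + (1/6 : ℝ) * (h x t)^2 * (px u x t)^2
        + g * h x t + (1/3 : ℝ) * h x t * gam h u x t) * (h x t * u x t))
      = (fun x t =>
      ((1/2 : ℝ) * (u x t)^2 + (1/6 : ℝ) * (h x t)^2 * (px u x t)^2 + g * h x t)
        * (h x t * u x t)
      + (1/3 : ℝ) * ((h x t)^2 * gam h u x t) * u x t) := by
    funext a b; ring
  rw [hFeq]
  have EpxF : px (fun x t =>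
      ((1/2 : ℝ) * (u x t)^2 + (1/6 : ℝ) * (h x t)^2 * (px u x t)^2 + g * h x t)
        * (h x t * u x t)
      + (1/3 : ℝ) * ((h x t)^2 * gam h u x t) * u x t) x t
      = (U*Ux + (1/3)*H*Hx*Ux^2 + (1/3)*H^2*Ux*Uxx + g*Hx)*(H*U)
        + ((1/2)*U^2 + (1/6)*H^2*Ux^2 + g*H)*(Hx*U + H*Ux)
        + (1/3)*(K*U + H^2*G*Ux) := by
    have h1 : HasDerivAt (fun x' =>
        ((1/2 : ℝ) * (u x' t)^2 + (1/6 : ℝ) * (h x' t)^2 * (px u x' t)^2 + g * h x' t)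
          * (h x' t * u x' t)
        + (1/3 : ℝ) * ((h x' t)^2 * gam h u x' t) * u x' t)
        ((U*Ux + (1/3)*H*Hx*Ux^2 + (1/3)*H^2*Ux*Uxx + g*Hx)*(H*U)
          + ((1/2)*U^2 + (1/6)*H^2*Ux^2 + g*H)*(Hx*U + H*Ux)
          + (1/3)*(K*U + H^2*G*Ux)) x := by
      have B1 := (((Smu.hdx x t).pow 2).const_mul (1/2 : ℝ)).add
        ((((Smh.hdx x t).pow 2).const_mul (1/6 : ℝ)).mul ((Smux.hdx x t).pow 2))
      have B2 := B1.add ((Smh.hdx x t).const_mul g)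
      have B3 := B2.mul ((Smh.hdx x t).mul (Smu.hdx x t))
      have B4 := ((SmW.hdx x t).const_mul (1/3 : ℝ)).mul (Smu.hdx x t)
      have B5 := B3.add B4
      refine B5.congr_deriv ?_
      simp only [hH, hU, hHx, hHt, hUx, hUt, hUxx, hUxt, hGdef, hK]
      simp only [Pi.add_apply, Pi.mul_apply, Pi.pow_apply]
      ring
    exact h1.deriv
  rw [EpxF]
  -- the mass equation, expanded
  have hmassx : Ht + (Hx * U + H * Ux) = 0 := by
    have h2 : px (fun x t => h x t * u x t) x t = Hx * U + H * Ux :=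
      ((Smh.hdx x t).mul (Smu.hdx x t)).deriv
    have := hmass x t
    rw [h2] at this
    exact this
  -- the momentum equation, solved for K
  have hKval : K = -3*H*(Ut + U*Ux + g*Hx) := by
    have hm : Ut + U*Ux + g*Hx + (1/3 : ℝ)*H⁻¹*K = 0 := hmom x t
    have hne : H ≠ 0 := ne_of_gt (hpos x t)
    field_simp at hm
    nlinarith [hm]
  have hGval : G = H*(Ux^2 - Uxt - U*Uxx) := by rw [hGdef]; rfl
  linear_combination ((1/2)*U^2 + (1/2)*H^2*Ux^2 + g*H) * hmassx
    + ((1/3)*U) * hKval + ((1/3)*H^2*Ux) * hGval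
end

section
/- Suppose smooth functions h, φ, u, v, p, q, r, s on ℝ² with h > 0 satisfy the eight multi-symplectic component equations of the Serre system. Then the mass conservation equation h_t + (h u)_x = 0 holds and the free-surface impermeability condition h_t + u h_x = v holds. -/
/-- The multi-symplectic Serre system implies mass conservation
    h_t + (hu)_x = 0 and free-surface impermeability h_t + u h_x = v. -/
theorem serre_ms_mass_and_impermeability
    (g : ℝ) (hg : 0 < g) (h φ u v p q r s : ℝ → ℝ → ℝ)
    (hh : ContDiff ℝ (⊤ : ℕ∞) (fun w : ℝ × ℝ => h w.1 w.2))
    (hφ : ContDiff ℝ (⊤ : ℕ∞) (fun w : ℝ × ℝ => φ w.1 w.2))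
    (hu : ContDiff ℝ (⊤ : ℕ∞) (fun w : ℝ × ℝ => u w.1 w.2))
    (hv : ContDiff ℝ (⊤ : ℕ∞) (fun w : ℝ × ℝ => v w.1 w.2))
    (hp : ContDiff ℝ (⊤ : ℕ∞) (fun w : ℝ × ℝ => p w.1 w.2))
    (hq : ContDiff ℝ (⊤ : ℕ∞) (fun w : ℝ × ℝ => q w.1 w.2))
    (hr : ContDiff ℝ (⊤ : ℕ∞) (fun w : ℝ × ℝ => r w.1 w.2))
    (hs : ContDiff ℝ (⊤ : ℕ∞) (fun w : ℝ × ℝ => s w.1 w.2))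
    (hpos : ∀ x t, 0 < h x t)
    (e1 : ∀ x t, pt φ x t + (1/3 : ℝ) * pt p x t + (1/3 : ℝ) * px r x t
      = (1/6 : ℝ) * (v x t)^2 - (1/2 : ℝ) * (u x t)^2
        - (1/3 : ℝ) * s x t * u x t * v x t - g * h x t)
    (e2 : ∀ x t, pt h x t + px q x t = 0)
    (e3 : ∀ x t, q x t - h x t * u x t
      + (1/3 : ℝ) * s x t * (p x t - h x t * v x t) = 0)
    (e4 : ∀ x t, (1/3 : ℝ) * (h x t * v x t - p x t)
      + (1/3 : ℝ) * s x t * (q x t - h x t * u x t) = 0)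
    (e5 : ∀ x t, -(1/3 : ℝ) * pt h x t = (1/3 : ℝ) * (s x t * u x t - v x t))
    (e6 : ∀ x t, px φ x t = u x t + (1/3 : ℝ) * s x t * v x t)
    (e7 : ∀ x t, px h x t = s x t)
    (e8 : ∀ x t, p x t * u x t + q x t * v x t - r x t - h x t * u x t * v x t = 0) :
    (∀ x t, pt h x t + px (fun x t => h x t * u x t) x t = 0) ∧
    (∀ x t, pt h x t + u x t * px h x t = v x t) := by
  have hqeq : ∀ x t, q x t = h x t * u x t := by
    intro x t
    have h3 := e3 x t
    have h4 := e4 x t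
    have key : (q x t - h x t * u x t) * (3 + (s x t)^2) = 0 := by
      linear_combination 3 * h3 + 3 * (s x t) * h4
    have hne : (3 + (s x t)^2) ≠ 0 := by positivity
    have := mul_eq_zero.mp key
    rcases this with h0 | h0
    · linarith
    · exact absurd h0 hne
  constructor
  · intro x t
    have : px (fun x t => h x t * u x t) x t = px q x t := by
      simp only [px]
      congr 1
      funext x'
      exact (hqeq x' t).symm
    rw [this]
    exact e2 x t
  · intro x t
    have h5 := e5 x t
    have h7 := e7 x t
    rw [h7]
    linarith
end

section
/- Suppose smooth functions h, φ, u, v, p, q, r, s on ℝ² with h > 0 satisfy the eight multi-symplectic component equations of the Serre system. Then the Bernoulli-type equation φ_t + (1/2)u² + (1/6)h² u_x² + g h − (1/3)h² u_{xt} − (1/3)h u ∂_x[h u_x] = 0 holds. -/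
lemma sliceX_diff {f : ℝ → ℝ → ℝ} (hf : ContDiff ℝ (⊤ : ℕ∞) (fun w : ℝ × ℝ => f w.1 w.2)) (t : ℝ) :
    Differentiable ℝ (fun x' => f x' t) :=
  (hf.differentiable (by simp)).comp (differentiable_id.prodMk (differentiable_const t))

lemma sliceT_diff {f : ℝ → ℝ → ℝ} (hf : ContDiff ℝ (⊤ : ℕ∞) (fun w : ℝ × ℝ => f w.1 w.2)) (x : ℝ) :
    Differentiable ℝ (fun t' => f x t') :=
  (hf.differentiable (by simp)).comp ((differentiable_const x).prodMk differentiable_id)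

lemma px_eq {f : ℝ → ℝ → ℝ} (hf : ContDiff ℝ (⊤ : ℕ∞) (fun w : ℝ × ℝ => f w.1 w.2)) (x t : ℝ) :
    px f x t = fderiv ℝ (fun w : ℝ × ℝ => f w.1 w.2) (x, t) (1, 0) := by
  have h3 : HasDerivAt (fun x' : ℝ => ((x', t) : ℝ × ℝ)) ((1 : ℝ), (0 : ℝ)) x :=
    (hasDerivAt_id x).prodMk (hasDerivAt_const x t)
  exact (((hf.differentiable (by simp) (x, t)).hasFDerivAt.comp_hasDerivAt x h3)).deriv

lemma pt_eq {f : ℝ → ℝ → ℝ} (hf : ContDiff ℝ (⊤ : ℕ∞) (fun w : ℝ × ℝ => f w.1 w.2)) (x t : ℝ) :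
    pt f x t = fderiv ℝ (fun w : ℝ × ℝ => f w.1 w.2) (x, t) (0, 1) := by
  have h3 : HasDerivAt (fun t' : ℝ => ((x, t') : ℝ × ℝ)) ((0 : ℝ), (1 : ℝ)) t :=
    (hasDerivAt_const t x).prodMk (hasDerivAt_id t)
  exact (((hf.differentiable (by simp) (x, t)).hasFDerivAt.comp_hasDerivAt t h3)).deriv

lemma px_contDiff {f : ℝ → ℝ → ℝ} (hf : ContDiff ℝ (⊤ : ℕ∞) (fun w : ℝ × ℝ => f w.1 w.2)) :
    ContDiff ℝ (⊤ : ℕ∞) (fun w : ℝ × ℝ => px f w.1 w.2) := by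
  have : (fun w : ℝ × ℝ => px f w.1 w.2)
      = fun w : ℝ × ℝ => fderiv ℝ (fun w : ℝ × ℝ => f w.1 w.2) w ((1 : ℝ), (0 : ℝ)) := by
    funext w; exact px_eq hf w.1 w.2
  rw [this]
  exact (ContinuousLinearMap.apply ℝ ℝ ((1:ℝ), (0:ℝ))).contDiff.comp (hf.fderiv_right (by simp))

lemma pt_contDiff {f : ℝ → ℝ → ℝ} (hf : ContDiff ℝ (⊤ : ℕ∞) (fun w : ℝ × ℝ => f w.1 w.2)) :
    ContDiff ℝ (⊤ : ℕ∞) (fun w : ℝ × ℝ => pt f w.1 w.2) := by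
  have : (fun w : ℝ × ℝ => pt f w.1 w.2)
      = fun w : ℝ × ℝ => fderiv ℝ (fun w : ℝ × ℝ => f w.1 w.2) w ((0 : ℝ), (1 : ℝ)) := by
    funext w; exact pt_eq hf w.1 w.2
  rw [this]
  exact (ContinuousLinearMap.apply ℝ ℝ ((0:ℝ), (1:ℝ))).contDiff.comp (hf.fderiv_right (by simp))

lemma px_congr {f g : ℝ → ℝ → ℝ} (hfg : ∀ x t, f x t = g x t) (x t : ℝ) :
    px f x t = px g x t := by
  unfold px; congr 1; funext x'; exact hfg x' t

lemma pt_congr {f g : ℝ → ℝ → ℝ} (hfg : ∀ x t, f x t = g x t) (x t : ℝ) :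
    pt f x t = pt g x t := by
  unfold pt; congr 1; funext t'; exact hfg x t'

lemma px_mul {a b : ℝ → ℝ → ℝ} {x t : ℝ}
    (ha : DifferentiableAt ℝ (fun x' => a x' t) x)
    (hb : DifferentiableAt ℝ (fun x' => b x' t) x) :
    px (fun x t => a x t * b x t) x t = px a x t * b x t + a x t * px b x t :=
  deriv_mul ha hb

lemma pt_mul {a b : ℝ → ℝ → ℝ} {x t : ℝ}
    (ha : DifferentiableAt ℝ (fun t' => a x t') t)
    (hb : DifferentiableAt ℝ (fun t' => b x t') t) :
    pt (fun x t => a x t * b x t) x t = pt a x t * b x t + a x t * pt b x t :=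
  deriv_mul ha hb

lemma px_neg {a : ℝ → ℝ → ℝ} (x t : ℝ) :
    px (fun x t => -(a x t)) x t = -(px a x t) := by
  unfold px; exact deriv.neg

lemma pt_neg {a : ℝ → ℝ → ℝ} (x t : ℝ) :
    pt (fun x t => -(a x t)) x t = -(pt a x t) := by
  unfold pt; exact deriv.neg

lemma clairaut {f : ℝ → ℝ → ℝ} (hf : ContDiff ℝ (⊤ : ℕ∞) (fun w : ℝ × ℝ => f w.1 w.2)) (x t : ℝ) :
    pt (px f) x t = px (pt f) x t := by
  set F : ℝ × ℝ → ℝ := fun w => f w.1 w.2 with hF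
  have hH : ContDiff ℝ (⊤ : ℕ∞) (fderiv ℝ F) := hf.fderiv_right (by simp)
  have hHd : HasFDerivAt (fderiv ℝ F) (fderiv ℝ (fderiv ℝ F) (x, t)) (x, t) :=
    (hH.differentiable (by simp) (x, t)).hasFDerivAt
  have key1 : pt (px f) x t = fderiv ℝ (fderiv ℝ F) (x, t) (0, 1) (1, 0) := by
    rw [pt_eq (px_contDiff hf) x t]
    have h1 : (fun w : ℝ × ℝ => px f w.1 w.2)
        = fun w : ℝ × ℝ => fderiv ℝ F w ((1 : ℝ), (0 : ℝ)) := by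
      funext w; exact px_eq hf w.1 w.2
    rw [h1]
    have h2 : HasFDerivAt (fun w : ℝ × ℝ => fderiv ℝ F w ((1 : ℝ), (0 : ℝ)))
        ((ContinuousLinearMap.apply ℝ ℝ ((1:ℝ), (0:ℝ))).comp (fderiv ℝ (fderiv ℝ F) (x, t)))
        (x, t) :=
      (ContinuousLinearMap.apply ℝ ℝ ((1:ℝ), (0:ℝ))).hasFDerivAt.comp (x, t) hHd
    rw [h2.fderiv]; rfl
  have key2 : px (pt f) x t = fderiv ℝ (fderiv ℝ F) (x, t) (1, 0) (0, 1) := by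
    rw [px_eq (pt_contDiff hf) x t]
    have h1 : (fun w : ℝ × ℝ => pt f w.1 w.2)
        = fun w : ℝ × ℝ => fderiv ℝ F w ((0 : ℝ), (1 : ℝ)) := by
      funext w; exact pt_eq hf w.1 w.2
    rw [h1]
    have h2 : HasFDerivAt (fun w : ℝ × ℝ => fderiv ℝ F w ((0 : ℝ), (1 : ℝ)))
        ((ContinuousLinearMap.apply ℝ ℝ ((0:ℝ), (1:ℝ))).comp (fderiv ℝ (fderiv ℝ F) (x, t)))
        (x, t) :=
      (ContinuousLinearMap.apply ℝ ℝ ((0:ℝ), (1:ℝ))).hasFDerivAt.comp (x, t) hHd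
    rw [h2.fderiv]; rfl
  rw [key1, key2]
  exact second_derivative_symmetric (fun y => (hf.differentiable (by simp) y).hasFDerivAt) hHd _ _

/-- The multi-symplectic Serre system implies the Bernoulli-type equation. -/
theorem serre_ms_bernoulli
    (g : ℝ) (hg : 0 < g) (h φ u v p q r s : ℝ → ℝ → ℝ)
    (hh : ContDiff ℝ (⊤ : ℕ∞) (fun w : ℝ × ℝ => h w.1 w.2))
    (hφ : ContDiff ℝ (⊤ : ℕ∞) (fun w : ℝ × ℝ => φ w.1 w.2))
    (hu : ContDiff ℝ (⊤ : ℕ∞) (fun w : ℝ × ℝ => u w.1 w.2))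
    (hv : ContDiff ℝ (⊤ : ℕ∞) (fun w : ℝ × ℝ => v w.1 w.2))
    (hp : ContDiff ℝ (⊤ : ℕ∞) (fun w : ℝ × ℝ => p w.1 w.2))
    (hq : ContDiff ℝ (⊤ : ℕ∞) (fun w : ℝ × ℝ => q w.1 w.2))
    (hr : ContDiff ℝ (⊤ : ℕ∞) (fun w : ℝ × ℝ => r w.1 w.2))
    (hs : ContDiff ℝ (⊤ : ℕ∞) (fun w : ℝ × ℝ => s w.1 w.2))
    (hpos : ∀ x t, 0 < h x t)
    (e1 : ∀ x t, pt φ x t + (1/3 : ℝ) * pt p x t + (1/3 : ℝ) * px r x t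
      = (1/6 : ℝ) * (v x t)^2 - (1/2 : ℝ) * (u x t)^2
        - (1/3 : ℝ) * s x t * u x t * v x t - g * h x t)
    (e2 : ∀ x t, pt h x t + px q x t = 0)
    (e3 : ∀ x t, q x t - h x t * u x t
      + (1/3 : ℝ) * s x t * (p x t - h x t * v x t) = 0)
    (e4 : ∀ x t, (1/3 : ℝ) * (h x t * v x t - p x t)
      + (1/3 : ℝ) * s x t * (q x t - h x t * u x t) = 0)
    (e5 : ∀ x t, -(1/3 : ℝ) * pt h x t = (1/3 : ℝ) * (s x t * u x t - v x t))
    (e6 : ∀ x t, px φ x t = u x t + (1/3 : ℝ) * s x t * v x t)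
    (e7 : ∀ x t, px h x t = s x t)
    (e8 : ∀ x t, p x t * u x t + q x t * v x t - r x t - h x t * u x t * v x t = 0) :
    ∀ x t, pt φ x t + (1/2 : ℝ) * (u x t)^2
      + (1/6 : ℝ) * (h x t)^2 * (px u x t)^2 + g * h x t
      - (1/3 : ℝ) * (h x t)^2 * px (pt u) x t
      - (1/3 : ℝ) * h x t * u x t * px (fun x t => h x t * px u x t) x t = 0 := by
  -- Step 1: q = h u
  have hqhu : ∀ x t, q x t = h x t * u x t := by
    intro x t
    have hA : (q x t - h x t * u x t) * (3 + (s x t)^2) = 0 := by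
      linear_combination (3 : ℝ) * e3 x t + 3 * s x t * e4 x t
    rcases mul_eq_zero.mp hA with h' | h'
    · linarith
    · nlinarith [sq_nonneg (s x t)]
  -- Step 2: p = h v
  have hpv : ∀ x t, p x t = h x t * v x t := by
    intro x t
    linear_combination (-3 : ℝ) * e4 x t + s x t * hqhu x t
  -- Step 3: pt h = -(s u + h px u)
  have hth : ∀ x t, pt h x t = -(s x t * u x t + h x t * px u x t) := by
    intro x t
    have hq' : px q x t = px h x t * u x t + h x t * px u x t := by
      rw [px_congr hqhu x t]
      exact px_mul (sliceX_diff hh t x) (sliceX_diff hu t x)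
    rw [e7 x t] at hq'
    have h2 := e2 x t
    linarith
  -- Step 4: v = -(h px u)
  have hv2 : ∀ x t, v x t = -(h x t * px u x t) := by
    intro x t
    have h5 := e5 x t
    have ht := hth x t
    linarith
  -- Step 5: closed forms for p and r
  have hp2 : ∀ x t, p x t = -(h x t * (h x t * px u x t)) := by
    intro x t; rw [hpv x t, hv2 x t]; ring
  have hr2 : ∀ x t, r x t = h x t * (u x t * v x t) := by
    intro x t
    linear_combination -(e8 x t) + u x t * hpv x t + v x t * hqhu x t
  have hr3 : ∀ x t, r x t = -(h x t * (u x t * (h x t * px u x t))) := by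
    intro x t; rw [hr2 x t, hv2 x t]; ring
  intro x t
  have hcl := clairaut hu x t
  -- pt p
  have hptp : pt p x t
      = -(2 * h x t * pt h x t * px u x t + (h x t)^2 * px (pt u) x t) := by
    rw [pt_congr hp2 x t, pt_neg,
      pt_mul (sliceT_diff hh x t) (((sliceT_diff hh x).mul (sliceT_diff (px_contDiff hu) x)) t),
      pt_mul (sliceT_diff hh x t) (sliceT_diff (px_contDiff hu) x t), hcl]
    ring
  -- px r
  have hpxr : px r x t
      = -(2 * s x t * u x t * h x t * px u x t + (h x t)^2 * (px u x t)^2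
          + (h x t)^2 * u x t * px (px u) x t) := by
    rw [px_congr hr3 x t, px_neg,
      px_mul (sliceX_diff hh t x)
        (((sliceX_diff hu t).mul ((sliceX_diff hh t).mul (sliceX_diff (px_contDiff hu) t))) x),
      px_mul (sliceX_diff hu t x)
        (((sliceX_diff hh t).mul (sliceX_diff (px_contDiff hu) t)) x),
      px_mul (sliceX_diff hh t x) (sliceX_diff (px_contDiff hu) t x), e7 x t]
    ring
  -- goal term
  have hgm : px (fun x t => h x t * px u x t) x t
      = s x t * px u x t + h x t * px (px u) x t := by
    rw [px_mul (sliceX_diff hh t x) (sliceX_diff (px_contDiff hu) t x), e7 x t]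
  have E := e1 x t
  rw [hptp, hpxr, hv2 x t] at E
  rw [hgm]
  linear_combination E + (2/3 : ℝ) * h x t * px u x t * hth x t
end

section
/- For the relaxed shallow-water Lagrangian, the Euler–Lagrange equation obtained by variation with respect to ū gives μ̄ = ū, and substituting μ̄ = ū into the remaining Euler–Lagrange equations (δṽ, δμ̄, δφ̄, δh) together with the substitutions p = h ṽ, q = h ū, r = h ū ṽ, s = h_x yields equations (Sh)–(Ss) of the multi-symplectic Serre system. -/
/-- The Euler–Lagrange equations of the relaxed shallow-water Lagrangian,
    with μ̄ = ū substituted and p = h ṽ, q = h ū, r = h ū ṽ, s = h_x,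
    yield the multi-symplectic component equations (Sh)–(Ss). -/
theorem relaxed_lagrangian_to_multisymplectic
    (g : ℝ) (hg : 0 < g) (h φ u v μ : ℝ → ℝ → ℝ)
    (hh : ContDiff ℝ (⊤ : ℕ∞) (fun w : ℝ × ℝ => h w.1 w.2))
    (hφ : ContDiff ℝ (⊤ : ℕ∞) (fun w : ℝ × ℝ => φ w.1 w.2))
    (hu : ContDiff ℝ (⊤ : ℕ∞) (fun w : ℝ × ℝ => u w.1 w.2))
    (hv : ContDiff ℝ (⊤ : ℕ∞) (fun w : ℝ × ℝ => v w.1 w.2))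
    (hμ : ContDiff ℝ (⊤ : ℕ∞) (fun w : ℝ × ℝ => μ w.1 w.2))
    (hpos : ∀ x t, 0 < h x t)
    -- free-surface impermeability constraint: ṽ = h_t + μ̄ h_x
    (hconstr : ∀ x t, v x t = pt h x t + μ x t * px h x t)
    -- δū : μ̄ = ū
    (hEL1 : ∀ x t, μ x t = u x t)
    -- δμ̄ : ū + (1/3)ṽ h_x − φ̄_x = 0
    (hEL3 : ∀ x t, u x t + (1/3 : ℝ) * v x t * px h x t - px φ x t = 0)
    -- δφ̄ : h_t + (h μ̄)_x = 0
    (hEL4 : ∀ x t, pt h x t + px (fun x t => h x t * μ x t) x t = 0)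
    -- δh : Bernoulli-type equation
    (hEL5 : ∀ x t, μ x t * u x t - (1/2 : ℝ) * (u x t)^2 - (1/6 : ℝ) * (v x t)^2
      - μ x t * px φ x t - pt φ x t - g * h x t
      - (1/3 : ℝ) * h x t * (pt v x t + μ x t * px v x t + v x t * px μ x t) = 0)
    -- substitutions
    (p q r s : ℝ → ℝ → ℝ)
    (hpdef : ∀ x t, p x t = h x t * v x t)
    (hqdef : ∀ x t, q x t = h x t * u x t)
    (hrdef : ∀ x t, r x t = h x t * u x t * v x t)
    (hsdef : ∀ x t, s x t = px h x t) :
    (∀ x t, pt φ x t + (1/3 : ℝ) * pt p x t + (1/3 : ℝ) * px r x t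
      = (1/6 : ℝ) * (v x t)^2 - (1/2 : ℝ) * (u x t)^2
        - (1/3 : ℝ) * s x t * u x t * v x t - g * h x t) ∧
    (∀ x t, pt h x t + px q x t = 0) ∧
    (∀ x t, q x t - h x t * u x t
      + (1/3 : ℝ) * s x t * (p x t - h x t * v x t) = 0) ∧
    (∀ x t, (1/3 : ℝ) * (h x t * v x t - p x t)
      + (1/3 : ℝ) * s x t * (q x t - h x t * u x t) = 0) ∧
    (∀ x t, -(1/3 : ℝ) * pt h x t = (1/3 : ℝ) * (s x t * u x t - v x t)) ∧
    (∀ x t, px φ x t = u x t + (1/3 : ℝ) * s x t * v x t) ∧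
    (∀ x t, px h x t = s x t) ∧
    (∀ x t, p x t * u x t + q x t * v x t - r x t - h x t * u x t * v x t = 0) := by
  have keyT : ∀ (f : ℝ → ℝ → ℝ), ContDiff ℝ (⊤ : ℕ∞) (fun w : ℝ × ℝ => f w.1 w.2) →
      ∀ x t, DifferentiableAt ℝ (fun t' => f x t') t := by
    intro f hf x t
    exact ((hf.differentiable (by simp)) (x, t)).comp t
      ((differentiableAt_const x).prodMk differentiableAt_id)
  have keyX : ∀ (f : ℝ → ℝ → ℝ), ContDiff ℝ (⊤ : ℕ∞) (fun w : ℝ × ℝ => f w.1 w.2) →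
      ∀ x t, DifferentiableAt ℝ (fun x' => f x' t) x := by
    intro f hf x t
    exact ((hf.differentiable (by simp)) (x, t)).comp x
      ((differentiableAt_id (𝕜 := ℝ) (x := x)).prodMk (differentiableAt_const t))
  refine ⟨?_, ?_, ?_, ?_, ?_, ?_, ?_, ?_⟩
  · intro x t
    have hptp : pt p x t = pt h x t * v x t + h x t * pt v x t := by
      have e : (fun t' => p x t') = fun t' => h x t' * v x t' :=
        funext fun t' => hpdef x t'
      simp only [pt, e]
      rw [deriv_fun_mul (keyT h hh x t) (keyT v hv x t)]
    have hpxr : px r x t = (px h x t * u x t + h x t * px u x t) * v x t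
        + h x t * u x t * px v x t := by
      have e : (fun x' => r x' t) = fun x' => h x' t * u x' t * v x' t :=
        funext fun x' => hrdef x' t
      simp only [px, e]
      rw [deriv_fun_mul (c := fun x' => h x' t * u x' t) ((keyX h hh x t).mul (keyX u hu x t)) (keyX v hv x t),
        deriv_fun_mul (keyX h hh x t) (keyX u hu x t)]
    have eμ : px μ x t = px u x t := by
      simp only [px]; congr 1; funext x'; exact hEL1 x' t
    have e5 := hEL5 x t
    rw [hEL1, eμ] at e5
    have e3 := hEL3 x t
    have ec := hconstr x t
    rw [hEL1] at ec
    rw [hptp, hpxr, hsdef]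
    linear_combination (-1 : ℝ) * e5 + u x t * e3 - (1/3 : ℝ) * v x t * ec
  · intro x t
    have e : px q x t = px (fun x t => h x t * μ x t) x t := by
      simp only [px]; congr 1; funext x'; rw [hqdef, hEL1]
    rw [e]; exact hEL4 x t
  · intro x t; rw [hqdef, hpdef]; ring
  · intro x t; rw [hpdef, hqdef]; ring
  · intro x t
    have ec := hconstr x t
    rw [hEL1] at ec
    rw [hsdef]; linarith
  · intro x t; rw [hsdef]; linarith [hEL3 x t]
  · intro x t; exact (hsdef x t).symm
  · intro x t; rw [hpdef, hqdef, hrdef]; ring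
end
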